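/- Let U be an ordered field extension of ℝ, let x ∈ U^n have orthogonal decomposition x = α₁v₁ + ⋯ + α_kv_k (α_i > 0 in U with α_{i+1}/α_i infinitesimal, v_i ∈ ℝ^n orthonormal), and let f : ℝ^n → ℝ be a linear map with U-linear extension *f : U^n → U. Then *f(x) = 0 if and only if f(v_i) = 0 for all i = 1,…,k; *f(x) > 0 if and only if there exists i with f(v_j) = 0 for all j < i and f(v_i) > 0; and *f(x) < 0 if and only if there exists i with f(v_j) = 0 for all j < i and f(v_i) < 0. -/

import Mathlib

/-!
Expanding `x` in the weights, `*f(x) = ∑ αᵢ f(vᵢ)`. If `i₀` is the first index with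
`f(vᵢ₀) ≠ 0`, dividing by `αᵢ₀` leaves `f(vᵢ₀)` plus a sum of infinitesimals (the later
ratios `αⱼ/αᵢ₀` are products of consecutive infinitesimal ratios), so the sign of `*f(x)` is
that of `f(vᵢ₀)`. In other words `b ↦ ∑ αᵢ bᵢ` is an additive map from `ℝᵏ`, ordered
lexicographically, to `U` that sends positive vectors to positive elements; so it is strictly
monotone, and the three equivalences are its injectivity and order reflection at `0`.
-/

/-- `x` is infinitesimal in the ordered field extension `K` of `ℝ` (via `f`). -/
def Infml {K : Type*} [Field K] [LinearOrder K] [IsStrictOrderedRing K] (f : ℝ →+* K) (x : K) : Prop :=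
  ∀ r : ℝ, 0 < r → |x| < f r

/-- `x` is limited in the ordered field extension `K` of `ℝ` (via `f`). -/
def Ltd {K : Type*} [Field K] [LinearOrder K] [IsStrictOrderedRing K] (f : ℝ →+* K) (x : K) : Prop :=
  ∃ r : ℝ, |x| < f r

section Infinitesimal

variable {K : Type*} [Field K] [LinearOrder K] [IsStrictOrderedRing K] {f : ℝ →+* K}

theorem abs_map_of_strictMono (hf : StrictMono f) (c : ℝ) : |f c| = f |c| := by
  rw [abs, abs, hf.monotone.map_max, map_neg]

theorem infml_zero (hf : StrictMono f) : Infml f 0 := fun r hr => by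
  simpa using hf hr

theorem Infml.ltd {x : K} (hx : Infml f x) : Ltd f x := ⟨1, hx 1 one_pos⟩

theorem ltd_map (hf : StrictMono f) (c : ℝ) : Ltd f (f c) :=
  ⟨|c| + 1, by rw [abs_map_of_strictMono hf]; exact hf (lt_add_one _)⟩

theorem Infml.add {x y : K} (hx : Infml f x) (hy : Infml f y) : Infml f (x + y) := fun r hr =>
  calc |x + y| ≤ |x| + |y| := abs_add_le x y
    _ < f (r / 2) + f (r / 2) := add_lt_add (hx _ (half_pos hr)) (hy _ (half_pos hr))
    _ = f r := by rw [← map_add, add_halves]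

theorem Infml.mul_ltd (hf : StrictMono f) {x y : K} (hx : Infml f x) (hy : Ltd f y) :
    Infml f (x * y) := by
  obtain ⟨r, hr⟩ := hy
  have hr0 : 0 < r := hf.lt_iff_lt.mp (by simpa using (abs_nonneg y).trans_lt hr)
  intro s hs
  calc |x * y| = |x| * |y| := abs_mul x y
    _ < f (s / r) * f r := mul_lt_mul'' (hx _ (by positivity)) hr (abs_nonneg _) (abs_nonneg _)
    _ = f s := by rw [← map_mul, div_mul_cancel₀ s hr0.ne']

theorem infml_sum (hf : StrictMono f) {ι : Type*} (s : Finset ι) {g : ι → K}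
    (h : ∀ i ∈ s, Infml f (g i)) : Infml f (∑ i ∈ s, g i) := by
  induction s using Finset.cons_induction with
  | empty => simpa using infml_zero hf
  | cons i s hi ih =>
    rw [Finset.sum_cons]
    exact (h i (by simp)).add (ih fun j hj => h j (by simp [hj]))

theorem Infml.map_add_pos {ε : K} (hε : Infml f ε) {c : ℝ} (hc : 0 < c) : 0 < f c + ε := by
  linarith [neg_lt_of_abs_lt (hε c hc)]

theorem infml_div_of_lt (hf : StrictMono f) {k : ℕ} {a : Fin k → K} (hapos : ∀ i, 0 < a i)
    (hratio : ∀ (i : ℕ) (h : i + 1 < k),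
      Infml f (a ⟨i + 1, h⟩ / a ⟨i, Nat.lt_of_succ_lt h⟩))
    {i j : Fin k} (hij : i < j) : Infml f (a j / a i) := by
  suffices h : ∀ m, i.val + 1 ≤ m → ∀ hm : m < k, Infml f (a ⟨m, hm⟩ / a i) from
    h j hij j.isLt
  intro m him
  induction m, him using Nat.le_induction with
  | base => exact hratio i
  | succ m him ih =>
    intro hm
    have h := (hratio m hm).mul_ltd hf (ih (by omega)).ltd
    rwa [div_mul_div_cancel₀ (hapos _).ne'] at h

end Infinitesimal

section LexWeightedSum

variable {K : Type*} [Semiring K] (f : ℝ →+* K) {ι : Type*} [Fintype ι]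

def lexWeightedSum (a : ι → K) : Lex (ι → ℝ) →+ K where
  toFun b := ∑ i, a i * f (ofLex b i)
  map_zero' := by
    simp only [ofLex_zero, Pi.zero_apply, map_zero, mul_zero, Finset.sum_const_zero]
  map_add' b c := by
    simp only [ofLex_add, Pi.add_apply, map_add, mul_add, Finset.sum_add_distrib]

theorem lexWeightedSum_apply (a : ι → K) (b : ι → ℝ) :
    lexWeightedSum f a (toLex b) = ∑ i, a i * f (b i) := rfl

end LexWeightedSum

section LeadingTerm

variable {K : Type*} [Field K] [LinearOrder K] [IsStrictOrderedRing K] {f : ℝ →+* K}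
  {ι : Type*} [Fintype ι] [LinearOrder ι]

theorem sum_mul_map_pos (hf : StrictMono f) {a : ι → K} (hapos : ∀ i, 0 < a i)
    (hratio : ∀ i j, i < j → Infml f (a j / a i)) {b : ι → ℝ} {i₀ : ι}
    (hzero : ∀ j < i₀, b j = 0) (hpos : 0 < b i₀) : 0 < ∑ i, a i * f (b i) := by
  classical
  set ε := ∑ i ∈ Finset.univ.erase i₀, a i / a i₀ * f (b i)
  have hε : Infml f ε := by
    refine infml_sum hf _ fun i hi => ?_
    rcases lt_or_gt_of_ne (Finset.ne_of_mem_erase hi) with h | h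
    · simpa [hzero i h] using infml_zero hf
    · exact (hratio i₀ i h).mul_ltd hf (ltd_map hf _)
  have hsum : ∑ i, a i * f (b i) = a i₀ * (f (b i₀) + ε) := by
    rw [← Finset.add_sum_erase _ _ (Finset.mem_univ i₀), mul_add, Finset.mul_sum]
    congr 1
    refine Finset.sum_congr rfl fun i _ => ?_
    field_simp [(hapos i₀).ne']
  rw [hsum]
  exact mul_pos (hapos i₀) (hε.map_add_pos hpos)

theorem lexWeightedSum_strictMono (hf : StrictMono f) {a : ι → K} (hapos : ∀ i, 0 < a i)
    (hratio : ∀ i j, i < j → Infml f (a j / a i)) : StrictMono (lexWeightedSum f a) := by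
  refine (strictMono_iff_map_pos _).2 fun b ⟨i, hzero, hpos⟩ =>
    sum_mul_map_pos hf hapos hratio (fun j hj => (hzero j hj).symm) hpos

end LeadingTerm

theorem Pi.toLex_pos_iff {ι : Type*} [LT ι] {β : ι → Type*} [∀ i, Zero (β i)] [∀ i, LT (β i)]
    {b : ∀ i, β i} : 0 < toLex b ↔ ∃ i, (∀ j < i, b j = 0) ∧ 0 < b i :=
  exists_congr fun _ => and_congr_left' <| forall₂_congr fun _ _ => eq_comm

theorem Pi.toLex_neg_iff {ι : Type*} [LT ι] {β : ι → Type*} [∀ i, Zero (β i)] [∀ i, LT (β i)]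
    {b : ∀ i, β i} : toLex b < 0 ↔ ∃ i, (∀ j < i, b j = 0) ∧ b i < 0 := Iff.rfl

theorem RingHom.sum_map_mul_map_linearMap_single {K : Type*} [Semiring K] {n : Type*}
    [Fintype n] [DecidableEq n] (f : ℝ →+* K) (l : (n → ℝ) →ₗ[ℝ] ℝ) (w : n → ℝ) :
    ∑ c, f (w c) * f (l (Pi.single c 1)) = f (l w) := by
  conv_rhs => rw [pi_eq_sum_univ' w]
  simp

theorem stmt11_general {K : Type*} [Field K] [LinearOrder K] [IsStrictOrderedRing K] (f : ℝ →+* K) (hf : StrictMono f)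
    (n k : ℕ)
    (v : Fin k → Fin n → ℝ)
    (a : Fin k → K) (hapos : ∀ i, 0 < a i)
    (hratio : ∀ (i : ℕ) (h : i + 1 < k),
      Infml f (a ⟨i + 1, h⟩ / a ⟨i, Nat.lt_of_succ_lt h⟩))
    (x : Fin n → K) (hx : ∀ c, x c = ∑ i : Fin k, a i * f (v i c))
    (l : (Fin n → ℝ) →ₗ[ℝ] ℝ)
    (F : (Fin n → K) → K)
    (hF : ∀ y : Fin n → K, F y = ∑ c : Fin n, y c * f (l (Pi.single c 1))) :
    (F x = 0 ↔ ∀ i : Fin k, l (v i) = 0) ∧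
    (0 < F x ↔ ∃ i : Fin k, (∀ j : Fin k, j < i → l (v j) = 0) ∧ 0 < l (v i)) ∧
    (F x < 0 ↔ ∃ i : Fin k, (∀ j : Fin k, j < i → l (v j) = 0) ∧ l (v i) < 0) := by
  have hFx : F x = lexWeightedSum f a (toLex fun i => l (v i)) := by
    simp only [hF, hx, lexWeightedSum_apply, Finset.sum_mul, mul_assoc]
    rw [Finset.sum_comm]
    simp only [← Finset.mul_sum, RingHom.sum_map_mul_map_linearMap_single]
  have hmono := lexWeightedSum_strictMono hf hapos fun i j => infml_div_of_lt hf hapos hratio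
  rw [hFx, ← Pi.toLex_pos_iff, ← Pi.toLex_neg_iff, ← map_zero (lexWeightedSum f a),
    hmono.injective.eq_iff, hmono.lt_iff_lt, hmono.lt_iff_lt]
  exact ⟨funext_iff, Iff.rfl, Iff.rfl⟩

/-- Let `x = α₁v₁ + ⋯ + α_kv_k` be an orthogonal decomposition in `K^n`, where `K` is an
ordered field extension of `ℝ` in which every limited element has a standard part, and
let `ℓ : ℝ^n → ℝ` be linear with `K`-linear extension `F` (given on coordinates by
`F y = ∑ c, y c * ℓ(e_c)`).  Then the sign of `F x` is determined by the values of `ℓ`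
on the vectors of the index of `x`. -/
theorem stmt11 {K : Type*} [Field K] [LinearOrder K] [IsStrictOrderedRing K] (f : ℝ →+* K) (hf : StrictMono f)
    (st : K → ℝ)
    (hst : ∀ x : K, Ltd f x → Infml f (x - f (st x)))
    (n k : ℕ)
    (v : Fin k → Fin n → ℝ)
    (horth : ∀ i j : Fin k, (∑ c : Fin n, v i c * v j c) = if i = j then 1 else 0)
    (a : Fin k → K) (hapos : ∀ i, 0 < a i)
    (hratio : ∀ (i : ℕ) (h : i + 1 < k),
      Infml f (a ⟨i + 1, h⟩ / a ⟨i, Nat.lt_of_succ_lt h⟩))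
    (x : Fin n → K) (hx : ∀ c, x c = ∑ i : Fin k, a i * f (v i c))
    (l : (Fin n → ℝ) →ₗ[ℝ] ℝ)
    (F : (Fin n → K) → K)
    (hF : ∀ y : Fin n → K, F y = ∑ c : Fin n, y c * f (l (Pi.single c 1))) :
    (F x = 0 ↔ ∀ i : Fin k, l (v i) = 0) ∧
    (0 < F x ↔ ∃ i : Fin k, (∀ j : Fin k, j < i → l (v j) = 0) ∧ 0 < l (v i)) ∧
    (F x < 0 ↔ ∃ i : Fin k, (∀ j : Fin k, j < i → l (v j) = 0) ∧ l (v i) < 0) :=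
  stmt11_general f hf n k v a hapos hratio x hx l F hF
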